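/- Let Ã ∈ ℝ^{ñ×ñ}, B̃ ∈ ℝ^{ñ×m}, C̃ ∈ ℝ^{p×ñ}, F ∈ ℝ^{ñ×p}, and let U ∈ ℝ^{p×p} be invertible, with à + F·C̃ Hurwitz. Define M := U + U·C̃·(λI_ñ − (à + F·C̃))^{-1}·F ∈ 𝔽^{p×p} and N := U·C̃·(λI_ñ − (à + F·C̃))^{-1}·B̃ ∈ 𝔽^{p×m}, where 𝔽 = RatFunc ℝ. Then every entry of M and of N is stable, M is invertible over 𝔽, and M^{-1}·N = C̃·(λI_ñ − Ã)^{-1}·B̃; that is, the observer-based formula produces a stable left factorization of the strictly proper transfer function matrix C̃·(λI_ñ − Ã)^{-1}·B̃. -/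

import Mathlib

/-! Via the adjugate, every entry of `D + G (λI - A)⁻¹ H` is a polynomial divided by `χ_A`, and
the reduced denominator divides `χ_A`; so a Hurwitz `A` gives stable entries. For the
factorization put `S = λI - Ã` and `T = λI - (Ã + F C̃)`: then `S - T = F C̃`, and the resolvent
identity `T⁻¹ F C̃ S⁻¹ = T⁻¹ - S⁻¹` shows that `(1 - C̃ S⁻¹ F) U⁻¹` inverts `M = U (1 + C̃ T⁻¹ F)`
and that `(1 - C̃ S⁻¹ F) C̃ T⁻¹ = C̃ S⁻¹`. -/

open Matrix Polynomial

set_option synthInstance.maxHeartbeats 1000000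
set_option maxHeartbeats 1000000

noncomputable section

/-- The field of real rational functions. -/
abbrev FF : Type := RatFunc ℝ

/-- The rational function `λ` (the image of the polynomial indeterminate `X`). -/
noncomputable def lam : FF := RatFunc.X

/-- Entrywise embedding of a real matrix into matrices over `FF`. -/
noncomputable def mapF {k l : Type} (M : Matrix k l ℝ) : Matrix k l FF :=
  M.map (algebraMap ℝ FF)

/-- The pencil `λ I - M` over `FF`, for a real square matrix `M`. -/
noncomputable def lamI {k : Type} [Fintype k] [DecidableEq k] (M : Matrix k k ℝ) :
    Matrix k k FF := lam • (1 : Matrix k k FF) - mapF M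

/-- Entrywise complexification of a real matrix. -/
def mapC {k l : Type} (M : Matrix k l ℝ) : Matrix k l ℂ :=
  M.map (algebraMap ℝ ℂ)

/-- A real rational function is stable if every complex root of its reduced denominator
has real part `< 0`. -/
def StableF (f : RatFunc ℝ) : Prop :=
  ∀ z : ℂ, ((f.denom).map (algebraMap ℝ ℂ)).IsRoot z → z.re < 0

/-- A real square matrix is Hurwitz if all roots of its characteristic polynomial
have real part `< 0`. -/
def IsHurwitz {k : Type} [Fintype k] [DecidableEq k] (M : Matrix k k ℝ) : Prop :=
  ∀ z : ℂ, ((M.charpoly).map (algebraMap ℝ ℂ)).IsRoot z → z.re < 0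

/-- `A_K := K A11 - K A12 K + A21 - A22 K`. -/
noncomputable def AKmat {p r : ℕ} (A11 : Matrix (Fin p) (Fin p) ℝ)
    (A12 : Matrix (Fin p) (Fin r) ℝ) (A21 : Matrix (Fin r) (Fin p) ℝ)
    (A22 : Matrix (Fin r) (Fin r) ℝ) (K : Matrix (Fin r) (Fin p) ℝ) :
    Matrix (Fin r) (Fin p) ℝ :=
  K * A11 - K * A12 * K + A21 - A22 * K

/-- The `W` member of the SRTR pair obtained from `K`. -/
noncomputable def srtrW {p r : ℕ} (A11 : Matrix (Fin p) (Fin p) ℝ)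
    (A12 : Matrix (Fin p) (Fin r) ℝ) (A21 : Matrix (Fin r) (Fin p) ℝ)
    (A22 : Matrix (Fin r) (Fin r) ℝ) (K : Matrix (Fin r) (Fin p) ℝ) :
    Matrix (Fin p) (Fin p) FF :=
  mapF (A11 - A12 * K) +
    mapF A12 * (lamI (A22 + K * A12))⁻¹ * mapF (AKmat A11 A12 A21 A22 K)

/-- The `V` member of the SRTR pair obtained from `K`. -/
noncomputable def srtrV {p r m : ℕ} (A12 : Matrix (Fin p) (Fin r) ℝ)
    (A22 : Matrix (Fin r) (Fin r) ℝ) (B1 : Matrix (Fin p) (Fin m) ℝ)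
    (B2 : Matrix (Fin r) (Fin m) ℝ) (K : Matrix (Fin r) (Fin p) ℝ) :
    Matrix (Fin p) (Fin m) FF :=
  mapF B1 + mapF A12 * (lamI (A22 + K * A12))⁻¹ * mapF (K * B1 + B2)

/-- The plant transfer function `G = [I_p 0] (λ I_n - A)⁻¹ B`. -/
noncomputable def plantG {p r m : ℕ} (A11 : Matrix (Fin p) (Fin p) ℝ)
    (A12 : Matrix (Fin p) (Fin r) ℝ) (A21 : Matrix (Fin r) (Fin p) ℝ)
    (A22 : Matrix (Fin r) (Fin r) ℝ) (B1 : Matrix (Fin p) (Fin m) ℝ)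
    (B2 : Matrix (Fin r) (Fin m) ℝ) : Matrix (Fin p) (Fin m) FF :=
  fromCols (1 : Matrix (Fin p) (Fin p) FF) (0 : Matrix (Fin p) (Fin r) FF) *
    (lamI (fromBlocks A11 A12 A21 A22))⁻¹ * mapF (fromRows B1 B2)

/-- `(A12, A22)` is observable: `[A22 - μ I ; A12]` has full column rank for all `μ : ℂ`. -/
def ObsPair {p r : ℕ} (A12 : Matrix (Fin p) (Fin r) ℝ)
    (A22 : Matrix (Fin r) (Fin r) ℝ) : Prop :=
  ∀ μ : ℂ, (fromRows (mapC A22 - μ • (1 : Matrix (Fin r) (Fin r) ℂ)) (mapC A12)).rank = r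

/-- `(A, B)` is controllable: `[A - μ I, B]` has full row rank for all `μ : ℂ`. -/
def CtrbPair {p r m : ℕ} (A : Matrix (Fin p ⊕ Fin r) (Fin p ⊕ Fin r) ℝ)
    (B : Matrix (Fin p ⊕ Fin r) (Fin m) ℝ) : Prop :=
  ∀ μ : ℂ, (fromCols (mapC A - μ • (1 : Matrix (Fin p ⊕ Fin r) (Fin p ⊕ Fin r) ℂ))
    (mapC B)).rank = p + r

namespace Matrix

variable {α : Type*} [CommRing α] {n k : Type*} [Fintype n] [DecidableEq n] [Fintype k]

theorem inv_mul_mul_mul_inv_of_sub_eq {S T : Matrix n n α} {F : Matrix n k α}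
    {C : Matrix k n α} (hS : IsUnit S) (hT : IsUnit T) (h : S - T = F * C) :
    T⁻¹ * F * (C * S⁻¹) = T⁻¹ - S⁻¹ := by
  rw [Matrix.inv_sub_inv (iff_of_true hT hS), h]; simp only [Matrix.mul_assoc]

theorem inv_mul_mul_mul_inv_of_sub_eq' {S T : Matrix n n α} {F : Matrix n k α}
    {C : Matrix k n α} (hS : IsUnit S) (hT : IsUnit T) (h : S - T = F * C) :
    S⁻¹ * F * (C * T⁻¹) = T⁻¹ - S⁻¹ := by
  rw [← neg_sub S⁻¹, Matrix.inv_sub_inv (iff_of_true hS hT), ← neg_sub S, h]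
  simp only [Matrix.mul_neg, Matrix.neg_mul, neg_neg, Matrix.mul_assoc]

variable [DecidableEq k]

theorem one_add_mul_inv_mul_mul_one_sub {S T : Matrix n n α} {F : Matrix n k α}
    {C : Matrix k n α} (hS : IsUnit S) (hT : IsUnit T) (h : S - T = F * C) :
    (1 + C * T⁻¹ * F) * (1 - C * S⁻¹ * F) = 1 := by
  have key : C * T⁻¹ * F * (C * S⁻¹ * F) = C * (T⁻¹ - S⁻¹) * F := by
    rw [← inv_mul_mul_mul_inv_of_sub_eq hS hT h]; simp only [Matrix.mul_assoc]
  calc (1 + C * T⁻¹ * F) * (1 - C * S⁻¹ * F)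
      = 1 + C * T⁻¹ * F - C * S⁻¹ * F - C * T⁻¹ * F * (C * S⁻¹ * F) := by noncomm_ring
    _ = 1 := by rw [key, Matrix.mul_sub, Matrix.sub_mul]; abel

theorem one_sub_mul_inv_mul_mul {S T : Matrix n n α} {F : Matrix n k α}
    {C : Matrix k n α} (hS : IsUnit S) (hT : IsUnit T) (h : S - T = F * C) :
    (1 - C * S⁻¹ * F) * (C * T⁻¹) = C * S⁻¹ := by
  have key : C * S⁻¹ * F * (C * T⁻¹) = C * (T⁻¹ - S⁻¹) := by
    rw [← inv_mul_mul_mul_inv_of_sub_eq' hS hT h]; simp only [Matrix.mul_assoc]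
  rw [Matrix.sub_mul, Matrix.one_mul, key, Matrix.mul_sub, sub_sub_cancel]

theorem observer_left_factor {S T : Matrix n n α} {F : Matrix n k α}
    {C : Matrix k n α} {U : Matrix k k α} {m : Type*} (B : Matrix n m α) (hS : IsUnit S)
    (hT : IsUnit T) (hU : IsUnit U) (h : S - T = F * C) :
    IsUnit (U + U * C * T⁻¹ * F) ∧
      (U + U * C * T⁻¹ * F)⁻¹ * (U * C * T⁻¹ * B) = C * S⁻¹ * B := by
  have hUdet := (Matrix.isUnit_iff_isUnit_det U).mp hU
  have hRight : (U + U * C * T⁻¹ * F) * ((1 - C * S⁻¹ * F) * U⁻¹) = 1 := by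
    rw [show U + U * C * T⁻¹ * F = U * (1 + C * T⁻¹ * F) by
      simp only [Matrix.mul_add, Matrix.mul_one, Matrix.mul_assoc], Matrix.mul_assoc,
      ← Matrix.mul_assoc (1 + _), one_add_mul_inv_mul_mul_one_sub hS hT h,
      Matrix.one_mul, Matrix.mul_nonsing_inv U hUdet]
  refine ⟨(Matrix.isUnit_iff_isUnit_det _).mpr (Matrix.isUnit_det_of_right_inverse hRight), ?_⟩
  calc (U + U * C * T⁻¹ * F)⁻¹ * (U * C * T⁻¹ * B)
      = (1 - C * S⁻¹ * F) * (U⁻¹ * U) * (C * T⁻¹) * B := by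
        rw [Matrix.inv_eq_right_inv hRight]; simp only [Matrix.mul_assoc]
    _ = C * S⁻¹ * B := by
        rw [Matrix.nonsing_inv_mul U hUdet, Matrix.mul_one, one_sub_mul_inv_mul_mul hS hT h]

end Matrix

section RationalTransfer

theorem mapF_mul {k l r : Type} [Fintype k] (G : Matrix l k ℝ) (H : Matrix k r ℝ) :
    mapF (G * H) = mapF G * mapF H :=
  Matrix.map_mul

variable {k l r : Type} [Fintype k] [DecidableEq k]

theorem mapF_eq_map_map (M : Matrix l r ℝ) :
    mapF M = (M.map C).map (algebraMap ℝ[X] FF) := by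
  rw [mapF, Matrix.map_map, ← Polynomial.algebraMap_eq, ← RingHom.coe_comp,
    ← IsScalarTower.algebraMap_eq]

theorem lamI_eq_map_charmatrix (A : Matrix k k ℝ) :
    lamI A = (charmatrix A).map (algebraMap ℝ[X] FF) := by
  ext i j
  by_cases hij : i = j
  · subst hij
    simp [lamI, lam, mapF, charmatrix_apply_eq, RatFunc.algebraMap_X, RatFunc.algebraMap_C]
  · simp [lamI, mapF, hij, RatFunc.algebraMap_C]

theorem det_lamI (A : Matrix k k ℝ) :
    (lamI A).det = algebraMap ℝ[X] FF A.charpoly := by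
  rw [lamI_eq_map_charmatrix, charpoly, ← RingHom.mapMatrix_apply, ← RingHom.map_det]

theorem algebraMap_charpoly_ne_zero (A : Matrix k k ℝ) :
    algebraMap ℝ[X] FF A.charpoly ≠ 0 :=
  (map_ne_zero_iff _ (RatFunc.algebraMap_injective ℝ)).mpr A.charpoly_monic.ne_zero

theorem isUnit_lamI (A : Matrix k k ℝ) : IsUnit (lamI A) := by
  rw [Matrix.isUnit_iff_isUnit_det, det_lamI]
  exact (algebraMap_charpoly_ne_zero A).isUnit

theorem inv_lamI (A : Matrix k k ℝ) :
    (lamI A)⁻¹ = (algebraMap ℝ[X] FF A.charpoly)⁻¹ •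
      (adjugate (charmatrix A)).map (algebraMap ℝ[X] FF) := by
  rw [Matrix.inv_def, det_lamI, Ring.inverse_eq_inv', lamI_eq_map_charmatrix,
    ← RingHom.mapMatrix_apply, ← RingHom.map_adjugate, RingHom.mapMatrix_apply]

theorem lamI_sub_lamI_add [Fintype l] (A : Matrix k k ℝ) (F : Matrix k l ℝ)
    (C : Matrix l k ℝ) : lamI A - lamI (A + F * C) = mapF F * mapF C := by
  rw [lamI, lamI, sub_sub_sub_cancel_left, ← mapF_mul, mapF, mapF, mapF,
    Matrix.map_add _ (map_add _), add_sub_cancel_left]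

end RationalTransfer

section Stability

theorem stableF_div {c : ℝ[X]} (hc : ∀ z : ℂ, (c.map (algebraMap ℝ ℂ)).IsRoot z → z.re < 0)
    (p : ℝ[X]) : StableF (algebraMap ℝ[X] FF p / algebraMap ℝ[X] FF c) := fun z hz =>
  hc z (hz.dvd (Polynomial.map_dvd _ (RatFunc.denom_div_dvd p c)))

variable {k l r : Type} [Fintype k] [DecidableEq k]

theorem mapF_add_mul_inv_lamI_mul (A : Matrix k k ℝ) (D : Matrix l r ℝ) (G : Matrix l k ℝ)
    (H : Matrix k r ℝ) :
    mapF D + mapF G * (lamI A)⁻¹ * mapF H = (algebraMap ℝ[X] FF A.charpoly)⁻¹ •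
      (A.charpoly • D.map C + G.map C * adjugate (charmatrix A) * H.map C).map
        (algebraMap ℝ[X] FF) := by
  have hχ := algebraMap_charpoly_ne_zero A
  rw [Matrix.map_add _ (map_add _), smul_add, inv_lamI, Matrix.mul_smul, Matrix.smul_mul,
    Matrix.map_mul, Matrix.map_mul, ← mapF_eq_map_map, ← mapF_eq_map_map]
  congr 1
  ext i j
  simp [mapF_eq_map_map, hχ]

theorem stableF_realization {A : Matrix k k ℝ} (hA : IsHurwitz A) (D : Matrix l r ℝ)
    (G : Matrix l k ℝ) (H : Matrix k r ℝ) (i : l) (j : r) :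
    StableF ((mapF D + mapF G * (lamI A)⁻¹ * mapF H) i j) := by
  rw [mapF_add_mul_inv_lamI_mul, Matrix.smul_apply, Matrix.map_apply, smul_eq_mul,
    inv_mul_eq_div]
  exact stableF_div hA _

end Stability

theorem stmt_18_general (q p m : ℕ)
    (At : Matrix (Fin q) (Fin q) ℝ) (Bt : Matrix (Fin q) (Fin m) ℝ)
    (Ct : Matrix (Fin p) (Fin q) ℝ) (Fo : Matrix (Fin q) (Fin p) ℝ)
    (U : Matrix (Fin p) (Fin p) ℝ) (hU : IsUnit U)
    (hHur : IsHurwitz (At + Fo * Ct)) :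
    let M : Matrix (Fin p) (Fin p) FF :=
      mapF U + mapF U * mapF Ct * (lamI (At + Fo * Ct))⁻¹ * mapF Fo
    let N : Matrix (Fin p) (Fin m) FF :=
      mapF U * mapF Ct * (lamI (At + Fo * Ct))⁻¹ * mapF Bt
    (∀ i j, StableF (M i j)) ∧ (∀ i j, StableF (N i j)) ∧
    IsUnit M ∧
    M⁻¹ * N = mapF Ct * (lamI At)⁻¹ * mapF Bt := by
  intro M N
  have hN : N = mapF 0 + mapF (U * Ct) * (lamI (At + Fo * Ct))⁻¹ * mapF Bt := by
    rw [mapF_mul, mapF, Matrix.map_zero _ (map_zero _), zero_add]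
  refine ⟨?_, ?_, Matrix.observer_left_factor (mapF Bt) (isUnit_lamI At) (isUnit_lamI _)
    (hU.map (algebraMap ℝ FF).mapMatrix) (lamI_sub_lamI_add At Fo Ct)⟩
  · simpa only [mapF_mul] using stableF_realization hHur U (U * Ct) Fo
  · simpa only [hN] using stableF_realization hHur 0 (U * Ct) Bt

/-- the observer-based formula produces a stable left factorization of the
strictly proper transfer function matrix `C̃ (λ I - Ã)⁻¹ B̃`. -/
theorem stmt_18 (q p m : ℕ) (hq : 0 < q) (hp : 0 < p) (hm : 0 < m)
    (At : Matrix (Fin q) (Fin q) ℝ) (Bt : Matrix (Fin q) (Fin m) ℝ)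
    (Ct : Matrix (Fin p) (Fin q) ℝ) (Fo : Matrix (Fin q) (Fin p) ℝ)
    (U : Matrix (Fin p) (Fin p) ℝ) (hU : IsUnit U)
    (hHur : IsHurwitz (At + Fo * Ct)) :
    let M : Matrix (Fin p) (Fin p) FF :=
      mapF U + mapF U * mapF Ct * (lamI (At + Fo * Ct))⁻¹ * mapF Fo
    let N : Matrix (Fin p) (Fin m) FF :=
      mapF U * mapF Ct * (lamI (At + Fo * Ct))⁻¹ * mapF Bt
    (∀ i j, StableF (M i j)) ∧ (∀ i j, StableF (N i j)) ∧
    IsUnit M ∧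
    M⁻¹ * N = mapF Ct * (lamI At)⁻¹ * mapF Bt :=
  stmt_18_general q p m At Bt Ct Fo U hU hHur
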